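/- arXiv:2302.02149 — 7 statements merged into one kernel-verified Lean document; each statement's English description precedes it below -/
import Mathlib

section
/- Let m ≥ 2, let s : ℕ → Fin m, and let n : ℕ. Assume the tail of s beyond position n is not constantly the maximal digit, i.e. there exists j ≥ n with (s j : ℕ) ≠ m − 1. Then, with k = ∑_{i<n} (s i) · m^{n-1-i}, the Gödel encoding ψ(s) lies in the half-open interval [k/m^n, (k+1)/m^n). -/
/-!
Split `ψ(s)` after the first `n` digits: the head is exactly `k / m ^ n`, and the tail is
`ψ(σⁿ s) / m ^ n` for the shifted sequence `σⁿ s`. Since every digit is at most `m - 1` and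
`∑ (m - 1) / m ^ (j + 1) = 1`, a sequence with some digit below `m - 1` has `0 ≤ ψ < 1`.
-/

/-- The Gödel encoding of a one-sided infinite sequence over `Fin m`. -/
noncomputable def psi (m : ℕ) (s : ℕ → Fin m) : ℝ :=
  ∑' k : ℕ, ((s k : ℕ) : ℝ) * ((m : ℝ) ^ (k + 1))⁻¹

theorem hasSum_sub_one_mul_inv_pow_succ {r : ℝ} (hr : 1 < r) :
    HasSum (fun k : ℕ => (r - 1) * (r ^ (k + 1))⁻¹) 1 := by
  have hterm : ∀ k : ℕ, (r - 1) * (r ^ (k + 1))⁻¹ = (r - 1) * r⁻¹ * r⁻¹ ^ k := fun k => by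
    rw [pow_succ, mul_inv, inv_pow]
    ring
  have hsum : (r - 1) * r⁻¹ * (1 - r⁻¹)⁻¹ = 1 := by
    field_simp
    exact div_self (by linarith)
  simpa only [hterm, hsum] using
    (hasSum_geometric_of_lt_one (by positivity) (inv_lt_one_of_one_lt₀ hr)).mul_left
      ((r - 1) * r⁻¹)

theorem Fin.cast_val_le_sub_one {m : ℕ} (d : Fin m) : ((d : ℕ) : ℝ) ≤ m - 1 := by
  have : (d : ℕ) + 1 ≤ m := d.isLt
  rw [le_sub_iff_add_le]
  exact_mod_cast this

theorem Fin.cast_val_lt_sub_one {m : ℕ} (d : Fin m) (hd : (d : ℕ) ≠ m - 1) :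
    ((d : ℕ) : ℝ) < m - 1 := by
  have : (d : ℕ) + 1 < m := by omega
  rw [lt_sub_iff_add_lt]
  exact_mod_cast this

section psi

variable {m : ℕ} (s : ℕ → Fin m)

theorem summable_psi (hm : 1 < m) :
    Summable fun k => ((s k : ℕ) : ℝ) * ((m : ℝ) ^ (k + 1))⁻¹ :=
  (hasSum_sub_one_mul_inv_pow_succ (by exact_mod_cast hm)).summable.of_nonneg_of_le
    (fun _ => by positivity)
    (fun k => mul_le_mul_of_nonneg_right (s k).cast_val_le_sub_one (by positivity))

theorem psi_nonneg : 0 ≤ psi m s :=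
  tsum_nonneg fun _ => by positivity

theorem psi_lt_one (hm : 1 < m) (h : ∃ j, (s j : ℕ) ≠ m - 1) : psi m s < 1 := by
  obtain ⟨j, hj⟩ := h
  exact hasSum_lt (f := fun k => ((s k : ℕ) : ℝ) * ((m : ℝ) ^ (k + 1))⁻¹) (i := j)
    (fun k => mul_le_mul_of_nonneg_right (s k).cast_val_le_sub_one (by positivity))
    (mul_lt_mul_of_pos_right ((s j).cast_val_lt_sub_one hj) (by positivity))
    (summable_psi s hm).hasSum (hasSum_sub_one_mul_inv_pow_succ (by exact_mod_cast hm))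

theorem psi_eq_sum_add_psi_shift (hm : 1 < m) (n : ℕ) :
    psi m s = ∑ i ∈ Finset.range n, ((s i : ℕ) : ℝ) * ((m : ℝ) ^ (i + 1))⁻¹
      + psi m (fun j => s (j + n)) / (m : ℝ) ^ n := by
  rw [psi, ← (summable_psi s hm).sum_add_tsum_nat_add n, psi, ← tsum_div_const]
  congr 1
  refine tsum_congr fun j => ?_
  rw [add_right_comm, pow_add, mul_inv, div_eq_mul_inv, mul_assoc]

end psi

theorem sum_mul_inv_pow_succ_eq_div {m : ℕ} (hm : m ≠ 0) (d : ℕ → ℕ) (n : ℕ) :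
    ∑ i ∈ Finset.range n, (d i : ℝ) * ((m : ℝ) ^ (i + 1))⁻¹
      = ((∑ i ∈ Finset.range n, d i * m ^ (n - 1 - i) : ℕ) : ℝ) / (m : ℝ) ^ n := by
  push_cast
  rw [Finset.sum_div]
  refine Finset.sum_congr rfl fun i hi => ?_
  have hpow : (m : ℝ) ^ (n - 1 - i) * (m : ℝ) ^ (i + 1) = (m : ℝ) ^ n := by
    rw [← pow_add]
    congr 1
    have := Finset.mem_range.mp hi
    omega
  field_simp
  rw [← hpow]
  ring

theorem stmt5 (m : ℕ) (hm : 2 ≤ m) (s : ℕ → Fin m) (n : ℕ)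
    (h : ∃ j, n ≤ j ∧ (s j : ℕ) ≠ m - 1) :
    ∀ k : ℕ, k = ∑ i ∈ Finset.range n, (s i : ℕ) * m ^ (n - 1 - i) →
      psi m s ∈ Set.Ico ((k : ℝ) / (m : ℝ) ^ n) (((k : ℝ) + 1) / (m : ℝ) ^ n) := by
  intro k hk
  have hm1 : 1 < m := hm
  obtain ⟨j, hnj, hj⟩ := h
  have htail_lt : psi m (fun i => s (i + n)) < 1 :=
    psi_lt_one _ hm1 ⟨j - n, by rwa [Nat.sub_add_cancel hnj]⟩
  have hpow : (0 : ℝ) < (m : ℝ) ^ n := by positivity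
  rw [psi_eq_sum_add_psi_shift s hm1 n, sum_mul_inv_pow_succ_eq_div (by omega), ← hk, add_div]
  exact ⟨le_add_of_nonneg_right (div_nonneg (psi_nonneg _) hpow.le),
    add_lt_add_right ((div_lt_div_iff_of_pos_right hpow).2 htail_lt) _⟩
end

section
/- Let m ≥ 2 and let p, q : ℕ → Fin m be non-degenerate sequences. Then for every n : ℕ, the sequences p and q agree on their first n entries (p i = q i for all i < n) if and only if there exists a natural number k < m^n such that both ψ(p) and ψ(q) lie in the half-open interval [k/m^n, (k+1)/m^n). -/
/-- A sequence is non-degenerate if it is not eventually equal to the maximal digit. -/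
def NonDegenerate (m : ℕ) (s : ℕ → Fin m) : Prop :=
  ∀ N : ℕ, ∃ k, N ≤ k ∧ (s k : ℕ) ≠ m - 1

/-!
`ψ` is Mathlib's `Real.ofDigits`. Split `ψ(s) = (d + ψ(s'))/mⁿ`, where `d < mⁿ` is the integer
whose base-`m` digits are `s 0, …, s (n-1)` and `s'` is `s` shifted by `n`. Non-degeneracy of
`s'` gives `0 ≤ ψ(s') < 1`, so `d = ⌊mⁿ ψ(s)⌋`: `ψ(s)` lies in the `d`-th interval of level `n`
and in no other. Since `d` determines and is determined by the first `n` digits, the claim follows.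
-/

def prefixValue (m : ℕ) (s : ℕ → Fin m) : ℕ → ℕ
  | 0 => 0
  | n + 1 => m * prefixValue m s n + s n

section prefixValue

variable {m : ℕ}

theorem prefixValue_lt_pow (s : ℕ → Fin m) (n : ℕ) : prefixValue m s n < m ^ n := by
  induction n with
  | zero => simp [prefixValue]
  | succ n ih =>
    calc m * prefixValue m s n + s n < m * prefixValue m s n + m := by simp
      _ = m * (prefixValue m s n + 1) := by ring
      _ ≤ m * m ^ n := Nat.mul_le_mul_left _ ih
      _ = m ^ (n + 1) := by ring

theorem prefixValue_eq_prefixValue_iff (p q : ℕ → Fin m) (n : ℕ) :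
    prefixValue m p n = prefixValue m q n ↔ ∀ i < n, p i = q i := by
  induction n with
  | zero => simp [prefixValue]
  | succ n ih =>
    have hm : 0 < m := Fin.pos (p 0)
    have hdigits : ∀ (a b : ℕ) (x y : Fin m),
        m * a + x = m * b + y ↔ a = b ∧ x = y := by
      refine fun a b x y => ⟨fun h => ⟨?_, Fin.ext ?_⟩, fun ⟨hab, hxy⟩ => by rw [hab, hxy]⟩
      · simpa [Nat.mul_add_div hm, Nat.div_eq_of_lt x.2, Nat.div_eq_of_lt y.2]
          using congrArg (· / m) h
      · simpa [Nat.mul_add_mod, Nat.mod_eq_of_lt x.2, Nat.mod_eq_of_lt y.2]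
          using congrArg (· % m) h
    simp only [prefixValue, hdigits, ih, Nat.forall_lt_succ_right]

end prefixValue

namespace Real

variable {m : ℕ}

theorem sum_range_ofDigitsTerm (s : ℕ → Fin m) (n : ℕ) :
    ∑ i ∈ Finset.range n, ofDigitsTerm s i = prefixValue m s n / (m : ℝ) ^ n := by
  have hm : (m : ℝ) ≠ 0 := by exact_mod_cast (Fin.pos (s 0)).ne'
  induction n with
  | zero => simp [prefixValue]
  | succ n ih =>
    rw [Finset.sum_range_succ, ih, ofDigitsTerm, prefixValue]
    push_cast
    field_simp
    ring

theorem pow_mul_ofDigits (s : ℕ → Fin m) (n : ℕ) :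
    (m : ℝ) ^ n * ofDigits s = prefixValue m s n + ofDigits (fun i => s (i + n)) := by
  have hm : (m : ℝ) ≠ 0 := by exact_mod_cast (Fin.pos (s 0)).ne'
  rw [ofDigits_eq_sum_add_ofDigits s n, sum_range_ofDigitsTerm]
  field_simp

end Real

namespace NonDegenerate

variable {m : ℕ} {s : ℕ → Fin m}

theorem one_lt (hs : NonDegenerate m s) : 1 < m := by
  obtain ⟨k, -, hk⟩ := hs 0
  have := (s k).2
  omega

theorem comp_add_right (hs : NonDegenerate m s) (n : ℕ) :
    NonDegenerate m (fun i => s (i + n)) := fun N => by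
  obtain ⟨k, hk, hsk⟩ := hs (N + n)
  exact ⟨k - n, by omega, by simpa [Nat.sub_add_cancel (show n ≤ k by omega)]⟩

/-- Strict because non-degeneracy excludes the expansion `0.(m-1)(m-1)… = 1`. -/
theorem ofDigits_lt_one (hs : NonDegenerate m s) : Real.ofDigits s < 1 := by
  have hm := hs.one_lt
  obtain ⟨k, -, hk⟩ := hs 0
  rw [← Real.ofDigits_const_last_eq_one' hm]
  refine Summable.tsum_lt_tsum (i := k) (fun i => ?_) ?_
    Real.summable_ofDigitsTerm Real.summable_ofDigitsTerm
  · unfold Real.ofDigitsTerm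
    gcongr
    exact_mod_cast Nat.le_sub_one_of_lt (s i).2
  · unfold Real.ofDigitsTerm
    gcongr
    exact_mod_cast Nat.lt_of_le_of_ne (Nat.le_sub_one_of_lt (s k).2) hk

theorem floor_pow_mul_ofDigits (hs : NonDegenerate m s) (n : ℕ) :
    ⌊(m : ℝ) ^ n * Real.ofDigits s⌋₊ = prefixValue m s n := by
  have htail := (hs.comp_add_right n).ofDigits_lt_one
  have htail₀ := Real.ofDigits_nonneg (fun i => s (i + n))
  rw [Nat.floor_eq_iff (mul_nonneg (by positivity) (Real.ofDigits_nonneg s)),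
    Real.pow_mul_ofDigits]
  constructor <;> linarith

end NonDegenerate

theorem mem_Ico_div_iff_floor_mul_eq {c x : ℝ} (hc : 0 < c) (hx : 0 ≤ x) (k : ℕ) :
    x ∈ Set.Ico ((k : ℝ) / c) (((k : ℝ) + 1) / c) ↔ ⌊c * x⌋₊ = k := by
  rw [Nat.floor_eq_iff (by positivity), Set.mem_Ico, div_le_iff₀ hc, lt_div_iff₀ hc,
    mul_comm x c]

theorem stmt6_general (m : ℕ) (p q : ℕ → Fin m)
    (hp : NonDegenerate m p) (hq : NonDegenerate m q) (n : ℕ) :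
    (∀ i < n, p i = q i) ↔
      ∃ k : ℕ, k < m ^ n ∧
        psi m p ∈ Set.Ico ((k : ℝ) / (m : ℝ) ^ n) (((k : ℝ) + 1) / (m : ℝ) ^ n) ∧
        psi m q ∈ Set.Ico ((k : ℝ) / (m : ℝ) ^ n) (((k : ℝ) + 1) / (m : ℝ) ^ n) := by
  have hmn : (0 : ℝ) < (m : ℝ) ^ n := pow_pos (by exact_mod_cast hp.one_lt.le) n
  have hmem : ∀ s, NonDegenerate m s → ∀ k : ℕ,
      psi m s ∈ Set.Ico ((k : ℝ) / (m : ℝ) ^ n) (((k : ℝ) + 1) / (m : ℝ) ^ n) ↔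
        prefixValue m s n = k := fun s hs k => by
    rw [show psi m s = Real.ofDigits s from rfl,
      mem_Ico_div_iff_floor_mul_eq hmn (Real.ofDigits_nonneg s), hs.floor_pow_mul_ofDigits]
  simp only [hmem p hp, hmem q hq, ← prefixValue_eq_prefixValue_iff]
  constructor
  · exact fun h => ⟨_, prefixValue_lt_pow p n, rfl, h.symm⟩
  · rintro ⟨k, -, hpk, hqk⟩
    exact hpk.trans hqk.symm

theorem stmt6 (m : ℕ) (hm : 2 ≤ m) (p q : ℕ → Fin m)
    (hp : NonDegenerate m p) (hq : NonDegenerate m q) (n : ℕ) :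
    (∀ i < n, p i = q i) ↔
      ∃ k : ℕ, k < m ^ n ∧
        psi m p ∈ Set.Ico ((k : ℝ) / (m : ℝ) ^ n) (((k : ℝ) + 1) / (m : ℝ) ^ n) ∧
        psi m q ∈ Set.Ico ((k : ℝ) / (m : ℝ) ^ n) (((k : ℝ) + 1) / (m : ℝ) ^ n) :=
  stmt6_general m p q hp hq n
end

section
/- Let m ≥ 2, l : ℕ, π a permutation of Fin m, and x ∈ [0,1). Then the cell-permutation map satisfies: (a) ρ_π(x) ∈ [0,1); (b) for every i < l, the i-th base-m digit of ρ_π(x) equals π applied to the i-th base-m digit of x, i.e. c_i(ρ_π(x)) = π(c_i(x)); and (c) for every i ≥ l, c_i(ρ_π(x)) = c_i(x). -/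
/-!
Overwriting the `j`-th digit `c` of `y ≥ 0` by `d` means adding `(d - c) m^{-(j+1)}`. Since
`⌊y m^{j+1}⌋ = m ⌊y m^j⌋ + c`, this turns `⌊y m^{j+1}⌋` into `m ⌊y m^j⌋ + d` with `d < m`, so no
carry occurs: the coarser floors `⌊y m^k⌋`, `k ≤ j`, are unchanged (for `k = 0` this keeps `y` in
`[0,1)`) and the finer ones move by multiples of `m`. The cell-permutation map at depth `l + 1` is
the one at depth `l` followed by overwriting digit `l`, so the theorem follows by induction on `l`.
-/

/-- The `i`-th base-`m` digit of `x ∈ [0,1)`. -/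
noncomputable def digit (m : ℕ) [NeZero m] (x : ℝ) (i : ℕ) : Fin m :=
  ⟨(⌊x * (m : ℝ) ^ (i + 1)⌋).toNat % m,
    Nat.mod_lt _ (Nat.pos_of_ne_zero (NeZero.ne m))⟩

/-- The cell-permutation map at depth `l` induced by a permutation `π` of the digits. -/
noncomputable def rho (m : ℕ) [NeZero m] (l : ℕ) (π : Equiv.Perm (Fin m)) (x : ℝ) : ℝ :=
  x + ∑ i ∈ Finset.range l,
    (((π (digit m x i) : ℕ) : ℝ) - ((digit m x i : ℕ) : ℝ)) * ((m : ℝ) ^ (i + 1))⁻¹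

noncomputable def setDigit (m : ℕ) [NeZero m] (j : ℕ) (d : Fin m) (y : ℝ) : ℝ :=
  y + (((d : ℕ) : ℝ) - ((digit m y j : ℕ) : ℝ)) * ((m : ℝ) ^ (j + 1))⁻¹

section Digits

variable {m : ℕ} [NeZero m]

lemma floor_mul_pow_eq_floor_mul_pow_div (y : ℝ) {k n : ℕ} (hkn : k ≤ n) :
    ⌊y * (m : ℝ) ^ k⌋ = ⌊y * (m : ℝ) ^ n⌋ / (m : ℤ) ^ (n - k) := by
  have hm : (m : ℝ) ^ (n - k) ≠ 0 := pow_ne_zero _ (Nat.cast_ne_zero.2 (NeZero.ne m))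
  have h : y * (m : ℝ) ^ k = y * (m : ℝ) ^ n / ((m ^ (n - k) : ℕ) : ℝ) := by
    rw [Nat.cast_pow, ← Nat.add_sub_of_le hkn, Nat.add_sub_cancel_left, pow_add, ← mul_assoc,
      mul_div_cancel_right₀ _ hm]
  rw [h, Int.floor_div_natCast, Nat.cast_pow]

lemma digit_val_eq {y : ℝ} (hy : 0 ≤ y) (i : ℕ) :
    ((digit m y i : ℕ) : ℤ) = ⌊y * (m : ℝ) ^ (i + 1)⌋ % m := by
  have h0 : 0 ≤ ⌊y * (m : ℝ) ^ (i + 1)⌋ := Int.floor_nonneg.2 (by positivity)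
  simp only [digit]
  push_cast
  rw [Int.toNat_of_nonneg h0]

lemma digit_eq_digit_of_floor_emod_eq {y z : ℝ} (hy : 0 ≤ y) (hz : 0 ≤ z) {i : ℕ}
    (h : ⌊y * (m : ℝ) ^ (i + 1)⌋ % m = ⌊z * (m : ℝ) ^ (i + 1)⌋ % m) :
    digit m y i = digit m z i := by
  apply Fin.ext
  exact_mod_cast (digit_val_eq hy i).trans (h.trans (digit_val_eq hz i).symm)

lemma floor_mul_pow_succ {y : ℝ} (hy : 0 ≤ y) (j : ℕ) :
    ⌊y * (m : ℝ) ^ (j + 1)⌋ = m * ⌊y * (m : ℝ) ^ j⌋ + (digit m y j : ℕ) := by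
  rw [digit_val_eq hy, floor_mul_pow_eq_floor_mul_pow_div y (Nat.le_add_right j 1),
    Nat.add_sub_cancel_left, pow_one, Int.emod_def]
  ring

variable {i j k : ℕ} {d : Fin m} {y : ℝ}

lemma floor_setDigit_mul_pow_of_lt (hjk : j < k) :
    ⌊setDigit m j d y * (m : ℝ) ^ k⌋ =
      ⌊y * (m : ℝ) ^ k⌋ + ((d : ℕ) - (digit m y j : ℕ)) * (m : ℤ) ^ (k - (j + 1)) := by
  have hm : (m : ℝ) ≠ 0 := Nat.cast_ne_zero.2 (NeZero.ne m)
  have hpow : (m : ℝ) ^ (k - (j + 1)) = (m : ℝ) ^ k * ((m : ℝ) ^ (j + 1))⁻¹ := pow_sub₀ _ hm hjk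
  have h : setDigit m j d y * (m : ℝ) ^ k = y * (m : ℝ) ^ k +
      (((((d : ℕ) - (digit m y j : ℕ)) * (m : ℤ) ^ (k - (j + 1)) : ℤ)) : ℝ) := by
    rw [setDigit]
    push_cast
    rw [hpow]
    ring
  rw [h, Int.floor_add_intCast]

lemma floor_setDigit_mul_pow_of_le (hy : 0 ≤ y) (hkj : k ≤ j) :
    ⌊setDigit m j d y * (m : ℝ) ^ k⌋ = ⌊y * (m : ℝ) ^ k⌋ := by
  have hm : (m : ℤ) ≠ 0 := Nat.cast_ne_zero.2 (NeZero.ne m)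
  have hj : ⌊setDigit m j d y * (m : ℝ) ^ j⌋ = ⌊y * (m : ℝ) ^ j⌋ := by
    have hd : ((d : ℕ) : ℤ) / m = 0 :=
      Int.ediv_eq_zero_of_lt (by positivity) (by exact_mod_cast d.isLt)
    rw [floor_mul_pow_eq_floor_mul_pow_div _ (Nat.le_add_right j 1),
      floor_setDigit_mul_pow_of_lt (Nat.lt_add_one j), floor_mul_pow_succ hy,
      Nat.add_sub_cancel_left, Nat.sub_self, pow_zero, mul_one, pow_one,
      add_add_sub_cancel, Int.mul_add_ediv_left _ _ hm, hd, add_zero]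
  rw [floor_mul_pow_eq_floor_mul_pow_div _ hkj, hj, ← floor_mul_pow_eq_floor_mul_pow_div _ hkj]

lemma floor_setDigit (hy : 0 ≤ y) : ⌊setDigit m j d y⌋ = ⌊y⌋ := by
  simpa using floor_setDigit_mul_pow_of_le (d := d) hy (Nat.zero_le j)

lemma setDigit_nonneg (hy : 0 ≤ y) : 0 ≤ setDigit m j d y := by
  rw [← Int.floor_nonneg, floor_setDigit hy, Int.floor_nonneg]
  exact hy

lemma setDigit_mem_Ico (hy : y ∈ Set.Ico (0 : ℝ) 1) : setDigit m j d y ∈ Set.Ico (0 : ℝ) 1 := by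
  rw [← Int.floor_eq_zero_iff, floor_setDigit hy.1, Int.floor_eq_zero_iff]
  exact hy

lemma digit_setDigit_self (hy : 0 ≤ y) : digit m (setDigit m j d y) j = d := by
  have h := digit_val_eq (m := m) (setDigit_nonneg (j := j) (d := d) hy) j
  rw [floor_setDigit_mul_pow_of_lt (Nat.lt_add_one j), floor_mul_pow_succ hy, Nat.sub_self,
    pow_zero, mul_one, add_add_sub_cancel, Int.mul_add_emod_self_left,
    Int.emod_eq_of_lt (by positivity) (by exact_mod_cast d.isLt)] at h
  exact Fin.ext (by exact_mod_cast h)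

lemma digit_setDigit_of_ne (hy : 0 ≤ y) (hij : i ≠ j) :
    digit m (setDigit m j d y) i = digit m y i := by
  apply digit_eq_digit_of_floor_emod_eq (setDigit_nonneg hy) hy
  rcases hij.lt_or_gt with hij | hji
  · rw [floor_setDigit_mul_pow_of_le hy hij]
  · rw [floor_setDigit_mul_pow_of_lt (Nat.lt_add_one_of_lt hji),
      show i + 1 - (j + 1) = i - j - 1 + 1 by omega, pow_succ _ (i - j - 1), ← mul_assoc,
      Int.add_mul_emod_self_right]

end Digits

lemma rho_zero (m : ℕ) [NeZero m] (π : Equiv.Perm (Fin m)) (x : ℝ) : rho m 0 π x = x := by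
  simp [rho]

lemma rho_succ {m : ℕ} [NeZero m] {l : ℕ} {π : Equiv.Perm (Fin m)} {x : ℝ}
    (h : digit m (rho m l π x) l = digit m x l) :
    rho m (l + 1) π x = setDigit m l (π (digit m x l)) (rho m l π x) := by
  rw [setDigit, h, rho, rho, Finset.sum_range_succ, add_assoc]

theorem stmt11_general (m : ℕ) [NeZero m] (l : ℕ) (π : Equiv.Perm (Fin m))
    (x : ℝ) (hx : x ∈ Set.Ico (0 : ℝ) 1) :
    rho m l π x ∈ Set.Ico (0 : ℝ) 1 ∧
    (∀ i < l, digit m (rho m l π x) i = π (digit m x i)) ∧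
    (∀ i, l ≤ i → digit m (rho m l π x) i = digit m x i) := by
  induction l with
  | zero => exact ⟨by rwa [rho_zero], by simp, fun i _ => by rw [rho_zero]⟩
  | succ l ih =>
    obtain ⟨hmem, hlt, hge⟩ := ih
    rw [rho_succ (hge l le_rfl)]
    refine ⟨setDigit_mem_Ico hmem, fun i hi => ?_, fun i hi => ?_⟩
    · rcases Nat.lt_succ_iff_lt_or_eq.1 hi with hi | rfl
      · rw [digit_setDigit_of_ne hmem.1 hi.ne, hlt i hi]
      · exact digit_setDigit_self hmem.1
    · rw [digit_setDigit_of_ne hmem.1 (by omega), hge i (by omega)]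

theorem stmt11 (m : ℕ) [NeZero m] (hm : 2 ≤ m) (l : ℕ) (π : Equiv.Perm (Fin m))
    (x : ℝ) (hx : x ∈ Set.Ico (0 : ℝ) 1) :
    rho m l π x ∈ Set.Ico (0 : ℝ) 1 ∧
    (∀ i < l, digit m (rho m l π x) i = π (digit m x i)) ∧
    (∀ i, l ≤ i → digit m (rho m l π x) i = digit m x i) :=
  stmt11_general m l π x hx
end

section
/- Let m ≥ 2 and l : ℕ. For all permutations σ, π of Fin m and all x ∈ [0,1), the cell-permutation maps at depth l satisfy ρ_σ(ρ_π(x)) = ρ_{σ∘π}(x), and ρ_{id}(x) = x. Hence π ↦ ρ_π defines an action of the symmetric group of Fin m on [0,1), so that the symmetric group is a symmetry group of the encoded dynamics. -/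
/-!
Write `x ∈ [0,1)` as `(d₀ + y) / m` with leading digit `d₀` and `y = fract (m x) ∈ [0,1)`,
whose digits are those of `x` shifted by one. Then `ρ_π` at depth `l + 1` sends `x` to
`(π d₀ + ρ_π y) / m` with `ρ_π` at depth `l`, so `ρ_π` preserves `[0,1)` and the composition law
follows by induction on the depth.
-/

namespace CellPermutation

variable {m : ℕ} [NeZero m]

lemma natCast_digit_eq_floor_emod {x : ℝ} (hx : 0 ≤ x) (i : ℕ) :
    ((digit m x i : ℕ) : ℤ) = ⌊x * (m : ℝ) ^ (i + 1)⌋ % m := by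
  rw [digit, Int.natCast_mod, Int.toNat_of_nonneg (Int.floor_nonneg.mpr (by positivity))]

lemma digit_succ {x : ℝ} (hx : 0 ≤ x) (i : ℕ) :
    digit m x (i + 1) = digit m (Int.fract (x * m)) i := by
  have hfloor : ⌊Int.fract (x * m) * (m : ℝ) ^ (i + 1)⌋
      = ⌊x * (m : ℝ) ^ (i + 1 + 1)⌋ - ⌊x * m⌋ * m ^ i * m := by
    rw [← Int.floor_sub_intCast, Int.fract]
    push_cast
    ring_nf
  ext
  apply Nat.cast_injective (R := ℤ)
  rw [natCast_digit_eq_floor_emod hx, natCast_digit_eq_floor_emod (Int.fract_nonneg _), hfloor,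
    Int.sub_mul_emod_self_right]

lemma natCast_digit_zero {x : ℝ} (hx : x ∈ Set.Ico (0 : ℝ) 1) :
    ((digit m x 0 : ℕ) : ℝ) = ⌊x * m⌋ := by
  have hm : (0 : ℝ) < m := Nat.cast_pos.mpr (NeZero.pos m)
  have h0 : 0 ≤ ⌊x * m⌋ := Int.floor_nonneg.mpr (by nlinarith [hx.1])
  have h1 : ⌊x * m⌋ < m := Int.floor_lt.mpr (by push_cast; nlinarith [hx.2])
  have := natCast_digit_eq_floor_emod (m := m) hx.1 0
  rw [zero_add, pow_one, Int.emod_eq_of_lt h0 h1] at this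
  exact_mod_cast this

lemma natCast_digit_zero_add_fract {x : ℝ} (hx : x ∈ Set.Ico (0 : ℝ) 1) :
    ((digit m x 0 : ℕ) : ℝ) + Int.fract (x * m) = x * m := by
  rw [natCast_digit_zero hx, Int.floor_add_fract]

lemma add_div_mem_Ico (c : Fin m) {y : ℝ} (hy : y ∈ Set.Ico (0 : ℝ) 1) :
    ((c : ℕ) + y) / m ∈ Set.Ico (0 : ℝ) 1 := by
  have hm : (0 : ℝ) < m := Nat.cast_pos.mpr (NeZero.pos m)
  have hc : ((c : ℕ) : ℝ) + 1 ≤ m := by exact_mod_cast c.isLt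
  constructor
  · exact div_nonneg (by linarith [hy.1]) hm.le
  · rw [div_lt_one hm]
    linarith [hy.2]

lemma digit_zero_add_div (c : Fin m) {y : ℝ} (hy : y ∈ Set.Ico (0 : ℝ) 1) :
    digit m (((c : ℕ) + y) / m) 0 = c := by
  have hfloor : ⌊((c : ℕ) + y) / m * m⌋ = (c : ℕ) := by
    rw [div_mul_cancel₀ _ (Nat.cast_ne_zero.mpr (NeZero.ne m)), Int.floor_natCast_add,
      Int.floor_eq_zero_iff.mpr hy, add_zero]
  have := natCast_digit_zero (m := m) (add_div_mem_Ico c hy)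
  rw [hfloor] at this
  exact Fin.ext (by exact_mod_cast this)

lemma fract_add_div_mul (c : Fin m) {y : ℝ} (hy : y ∈ Set.Ico (0 : ℝ) 1) :
    Int.fract (((c : ℕ) + y) / m * m) = y := by
  rw [div_mul_cancel₀ _ (Nat.cast_ne_zero.mpr (NeZero.ne m)), Int.fract_natCast_add,
    Int.fract_eq_self.mpr hy]

lemma rho_succ (l : ℕ) (π : Equiv.Perm (Fin m)) {x : ℝ} (hx : x ∈ Set.Ico (0 : ℝ) 1) :
    rho m (l + 1) π x = (((π (digit m x 0) : ℕ) : ℝ) + rho m l π (Int.fract (x * m))) / m := by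
  have hm : (m : ℝ) ≠ 0 := Nat.cast_ne_zero.mpr (NeZero.ne m)
  have htail : ∀ i ∈ Finset.range l,
      (((π (digit m x (i + 1)) : ℕ) : ℝ) - ((digit m x (i + 1) : ℕ) : ℝ))
          * ((m : ℝ) ^ (i + 1 + 1))⁻¹
        = (((π (digit m (Int.fract (x * m)) i) : ℕ) : ℝ)
            - ((digit m (Int.fract (x * m)) i : ℕ) : ℝ)) * ((m : ℝ) ^ (i + 1))⁻¹ / m := by
    intro i _
    rw [digit_succ (m := m) hx.1, pow_succ, mul_inv, div_eq_mul_inv, mul_assoc]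
  rw [rho, rho, Finset.sum_range_succ', Finset.sum_congr rfl htail, ← Finset.sum_div]
  have hx' := natCast_digit_zero_add_fract (m := m) hx
  rw [zero_add, pow_one]
  field_simp
  linear_combination -hx'

lemma rho_zero (π : Equiv.Perm (Fin m)) (x : ℝ) : rho m 0 π x = x := by
  simp [rho]

lemma rho_one (l : ℕ) (x : ℝ) : rho m l 1 x = x := by
  simp [rho]

lemma rho_mem_Ico (l : ℕ) (π : Equiv.Perm (Fin m)) {x : ℝ} (hx : x ∈ Set.Ico (0 : ℝ) 1) :
    rho m l π x ∈ Set.Ico (0 : ℝ) 1 := by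
  induction l generalizing x with
  | zero => rwa [rho_zero]
  | succ l ih =>
    rw [rho_succ l π hx]
    exact add_div_mem_Ico _ (ih ⟨Int.fract_nonneg _, Int.fract_lt_one _⟩)

lemma rho_rho (l : ℕ) (σ π : Equiv.Perm (Fin m)) {x : ℝ} (hx : x ∈ Set.Ico (0 : ℝ) 1) :
    rho m l σ (rho m l π x) = rho m l (σ * π) x := by
  induction l generalizing x with
  | zero => rw [rho_zero, rho_zero, rho_zero]
  | succ l ih =>
    have hfract : Int.fract (x * m) ∈ Set.Ico (0 : ℝ) 1 := ⟨Int.fract_nonneg _, Int.fract_lt_one _⟩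
    have hρ := rho_mem_Ico l π hfract
    rw [rho_succ l π hx, rho_succ l σ (add_div_mem_Ico _ hρ), digit_zero_add_div _ hρ,
      fract_add_div_mul _ hρ, ih hfract, rho_succ l (σ * π) hx, Equiv.Perm.mul_apply]

end CellPermutation

theorem stmt12_general (m : ℕ) [NeZero m] (l : ℕ) :
    (∀ σ π : Equiv.Perm (Fin m), ∀ x ∈ Set.Ico (0 : ℝ) 1,
      rho m l σ (rho m l π x) = rho m l (σ * π) x) ∧
    (∀ x ∈ Set.Ico (0 : ℝ) 1, rho m l 1 x = x) :=
  ⟨fun σ π _ hx => CellPermutation.rho_rho l σ π hx, fun x _ => CellPermutation.rho_one l x⟩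

theorem stmt12 (m : ℕ) [NeZero m] (hm : 2 ≤ m) (l : ℕ) :
    (∀ σ π : Equiv.Perm (Fin m), ∀ x ∈ Set.Ico (0 : ℝ) 1,
      rho m l σ (rho m l π x) = rho m l (σ * π) x) ∧
    (∀ x ∈ Set.Ico (0 : ℝ) 1, rho m l 1 x = x) :=
  stmt12_general m l
end

section
/- Let m ≥ 2, l : ℕ, π a permutation of Fin m, and k < m^l. Then the cell-permutation map ρ_π at depth l acts as a rigid translation on the cell E^k = [k/m^l, (k+1)/m^l): for all x, y ∈ E^k one has ρ_π(x) − x = ρ_π(y) − y; moreover, ρ_π maps E^k bijectively onto the cell E^{k'} = [k'/m^l, (k'+1)/m^l), where k' = ∑_{i<l} (π(d_i)) · m^{l-1-i} and d_0, …, d_{l-1} ∈ Fin m are the base-m digits of k, i.e. k = ∑_{i<l} (d_i) · m^{l-1-i}. -/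
/-! For `x` in the cell `E^k`, `⌊x m^(i+1)⌋ = k / m^(l-1-i)`, so the first `l` base-`m` digits of
`x` are the digits `d i` of `k`. Hence `ρ_π` adds the same constant
`C = ∑ (π (d i) - d i) m^(-(i+1)) = (k' - k) / m^l` to every point of `E^k`: on that cell it is the
translation carrying `E^k` onto `E^{k'}`. -/

namespace Nat

variable {m : ℕ}

lemma sum_range_succ_mul_pow_sub (l : ℕ) (d : ℕ → ℕ) :
    ∑ j ∈ Finset.range (l + 1), d j * m ^ (l - j) =
      m * ∑ j ∈ Finset.range l, d j * m ^ (l - 1 - j) + d l := by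
  rw [Finset.sum_range_succ, Finset.mul_sum, Nat.sub_self, pow_zero, mul_one]
  congr 1
  refine Finset.sum_congr rfl fun j hj => ?_
  rw [show l - j = l - 1 - j + 1 by grind, pow_succ]
  ring

lemma sum_mul_pow_sub_div_pow (d : ℕ → Fin m) {l i : ℕ} (hi : i < l) :
    (∑ j ∈ Finset.range l, (d j : ℕ) * m ^ (l - 1 - j)) / m ^ (l - 1 - i) =
      ∑ j ∈ Finset.range (i + 1), (d j : ℕ) * m ^ (i - j) := by
  induction l with
  | zero => omega
  | succ l ih =>
    rw [Nat.add_sub_cancel, sum_range_succ_mul_pow_sub]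
    rcases Nat.lt_succ_iff_lt_or_eq.mp hi with hi | rfl
    · rw [show l - i = l - 1 - i + 1 by omega, pow_succ', ← Nat.div_div_eq_div_mul,
        Nat.mul_add_div (d l).pos, Nat.div_eq_of_lt (d l).isLt, add_zero, ih hi]
    · rw [Nat.sub_self, pow_zero, Nat.div_one, sum_range_succ_mul_pow_sub]

lemma sum_mul_pow_sub_div_pow_mod (d : ℕ → Fin m) {l i : ℕ} (hi : i < l) :
    (∑ j ∈ Finset.range l, (d j : ℕ) * m ^ (l - 1 - j)) / m ^ (l - 1 - i) % m = d i := by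
  rw [sum_mul_pow_sub_div_pow d hi, sum_range_succ_mul_pow_sub, Nat.mul_add_mod,
    Nat.mod_eq_of_lt (d i).isLt]

end Nat

open Set

lemma Set.bijOn_Ico_of_eqOn_add_const {α : Type*} [AddCommGroup α] [PartialOrder α]
    [IsOrderedAddMonoid α] {f : α → α} {a b c : α} (h : EqOn f (· + c) (Ico a b)) :
    BijOn f (Ico a b) (Ico (a + c) (b + c)) := by
  rw [← image_add_const_Ico]
  exact (add_left_injective c).injOn.bijOn_image.congr h.symm

variable {m : ℕ} [NeZero m]

lemma floor_mul_pow_eq_of_mem_Ico {l k : ℕ} {x : ℝ}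
    (hx : x ∈ Ico ((k : ℝ) / (m : ℝ) ^ l) (((k : ℝ) + 1) / (m : ℝ) ^ l)) :
    ⌊x * (m : ℝ) ^ l⌋ = k := by
  have hpos : (0 : ℝ) < (m : ℝ) ^ l := pow_pos (Nat.cast_pos.mpr (NeZero.pos m)) l
  rw [Int.floor_eq_iff]
  exact ⟨by simpa using (div_le_iff₀ hpos).mp hx.1, by simpa using (lt_div_iff₀ hpos).mp hx.2⟩

lemma digit_eq_of_floor_mul_pow {l k i : ℕ} {x : ℝ} (hx : ⌊x * (m : ℝ) ^ l⌋ = k) (hi : i < l) :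
    (digit m x i : ℕ) = k / m ^ (l - 1 - i) % m := by
  have hpow : x * (m : ℝ) ^ (i + 1) = x * (m : ℝ) ^ l / ((m ^ (l - 1 - i) : ℕ) : ℝ) := by
    rw [Nat.cast_pow, eq_div_iff (pow_ne_zero _ (Nat.cast_ne_zero.mpr (NeZero.ne m))),
      mul_assoc, ← pow_add, show i + 1 + (l - 1 - i) = l by omega]
  simp only [digit, hpow, Int.floor_div_natCast, hx, ← Int.natCast_div, Int.toNat_natCast]

lemma rho_eq_add_of_digit_eq {l : ℕ} (π : Equiv.Perm (Fin m)) {x : ℝ} {d : ℕ → Fin m}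
    (h : ∀ i < l, digit m x i = d i) :
    rho m l π x = x + ∑ i ∈ Finset.range l,
      (((π (d i) : ℕ) : ℝ) - ((d i : ℕ) : ℝ)) * ((m : ℝ) ^ (i + 1))⁻¹ := by
  unfold rho
  congr 1
  exact Finset.sum_congr rfl fun i hi => by rw [h i (Finset.mem_range.mp hi)]

lemma cast_sum_mul_pow_sub_div_pow (l : ℕ) (f : ℕ → ℕ) :
    ((∑ i ∈ Finset.range l, f i * m ^ (l - 1 - i) : ℕ) : ℝ) / (m : ℝ) ^ l =
      ∑ i ∈ Finset.range l, (f i : ℝ) * ((m : ℝ) ^ (i + 1))⁻¹ := by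
  push_cast
  rw [Finset.sum_div]
  refine Finset.sum_congr rfl fun i hi => ?_
  have hm : (m : ℝ) ≠ 0 := Nat.cast_ne_zero.mpr (NeZero.ne m)
  rw [← pow_sub_mul_pow (m : ℝ) (Finset.mem_range.mp hi : i + 1 ≤ l),
    show l - (i + 1) = l - 1 - i by omega]
  field_simp

theorem stmt14_general (m : ℕ) [NeZero m] (l : ℕ) (π : Equiv.Perm (Fin m))
    (k : ℕ) (d : ℕ → Fin m)
    (hd : k = ∑ i ∈ Finset.range l, (d i : ℕ) * m ^ (l - 1 - i)) :
    (∀ x ∈ Set.Ico ((k : ℝ) / (m : ℝ) ^ l) (((k : ℝ) + 1) / (m : ℝ) ^ l),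
      ∀ y ∈ Set.Ico ((k : ℝ) / (m : ℝ) ^ l) (((k : ℝ) + 1) / (m : ℝ) ^ l),
        rho m l π x - x = rho m l π y - y) ∧
    (∀ k' : ℕ, k' = ∑ i ∈ Finset.range l, (π (d i) : ℕ) * m ^ (l - 1 - i) →
      Set.BijOn (rho m l π)
        (Set.Ico ((k : ℝ) / (m : ℝ) ^ l) (((k : ℝ) + 1) / (m : ℝ) ^ l))
        (Set.Ico ((k' : ℝ) / (m : ℝ) ^ l) (((k' : ℝ) + 1) / (m : ℝ) ^ l))) := by
  set C := ∑ i ∈ Finset.range l, (((π (d i) : ℕ) : ℝ) - ((d i : ℕ) : ℝ)) * ((m : ℝ) ^ (i + 1))⁻¹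
  have hrho : EqOn (rho m l π) (· + C)
      (Ico ((k : ℝ) / (m : ℝ) ^ l) (((k : ℝ) + 1) / (m : ℝ) ^ l)) := fun x hx =>
    rho_eq_add_of_digit_eq π fun i hi => Fin.ext <| by
      rw [digit_eq_of_floor_mul_pow (floor_mul_pow_eq_of_mem_Ico hx) hi, hd,
        Nat.sum_mul_pow_sub_div_pow_mod d hi]
  refine ⟨fun x hx y hy => by simp [hrho hx, hrho hy], fun k' hk' => ?_⟩
  have hshift : (k : ℝ) / (m : ℝ) ^ l + C = (k' : ℝ) / (m : ℝ) ^ l := by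
    rw [hd, hk', cast_sum_mul_pow_sub_div_pow, cast_sum_mul_pow_sub_div_pow,
      ← Finset.sum_add_distrib]
    exact Finset.sum_congr rfl fun i _ => by ring
  have hshift_succ : ((k : ℝ) + 1) / (m : ℝ) ^ l + C = ((k' : ℝ) + 1) / (m : ℝ) ^ l := by
    rw [add_div, add_div, add_right_comm, hshift]
  rw [← hshift_succ, ← hshift]
  exact Set.bijOn_Ico_of_eqOn_add_const hrho

theorem stmt14 (m : ℕ) [NeZero m] (hm : 2 ≤ m) (l : ℕ) (π : Equiv.Perm (Fin m))
    (k : ℕ) (hk : k < m ^ l) (d : ℕ → Fin m)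
    (hd : k = ∑ i ∈ Finset.range l, (d i : ℕ) * m ^ (l - 1 - i)) :
    (∀ x ∈ Set.Ico ((k : ℝ) / (m : ℝ) ^ l) (((k : ℝ) + 1) / (m : ℝ) ^ l),
      ∀ y ∈ Set.Ico ((k : ℝ) / (m : ℝ) ^ l) (((k : ℝ) + 1) / (m : ℝ) ^ l),
        rho m l π x - x = rho m l π y - y) ∧
    (∀ k' : ℕ, k' = ∑ i ∈ Finset.range l, (π (d i) : ℕ) * m ^ (l - 1 - i) →
      Set.BijOn (rho m l π)
        (Set.Ico ((k : ℝ) / (m : ℝ) ^ l) (((k : ℝ) + 1) / (m : ℝ) ^ l))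
        (Set.Ico ((k' : ℝ) / (m : ℝ) ^ l) (((k' : ℝ) + 1) / (m : ℝ) ^ l))) :=
  stmt14_general m l π k d hd
end

section
/- Let m ≥ 2 and l : ℕ, and let f : ℝ → ℝ be an observable that depends only on the pattern of equality of the first l base-m digits, i.e. assume that for all x, y ∈ [0,1), if for all i, j < l one has c_i(x) = c_j(x) ↔ c_i(y) = c_j(y), then f(x) = f(y). Then f is invariant under all Gödel recodings: for every permutation π of Fin m and every x ∈ [0,1), f(ρ_π(x)) = f(x), where ρ_π is the cell-permutation map at depth l. -/
namespace digit

variable {m : ℕ} [NeZero m]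

theorem succ (x : ℝ) (j : ℕ) : digit m x (j + 1) = digit m (x * m) j := by
  simp only [digit, mul_assoc, ← pow_succ']

theorem natCast_add (k : ℕ) {s : ℝ} (hs : 0 ≤ s) (j : ℕ) :
    digit m (k + s) j = digit m s j := by
  have hfloor : ⌊(k + s) * (m : ℝ) ^ (j + 1)⌋
      = ((k * m ^ (j + 1) : ℕ) : ℤ) + ⌊s * (m : ℝ) ^ (j + 1)⌋ := by
    rw [← Int.floor_natCast_add]
    push_cast
    ring_nf
  have hnonneg : 0 ≤ ⌊s * (m : ℝ) ^ (j + 1)⌋ := Int.floor_nonneg.2 (by positivity)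
  ext
  simp only [digit, hfloor]
  rw [Int.toNat_add (by positivity) hnonneg, Int.toNat_natCast, pow_succ, ← mul_assoc,
    Nat.mul_add_mod_self_right]

theorem natCast_zero_eq_floor {x : ℝ} (hx : x ∈ Set.Ico (0 : ℝ) 1) :
    ((digit m x 0 : ℕ) : ℝ) = ⌊x * m⌋ := by
  have hlt : ⌊x * m⌋ < m :=
    Int.floor_lt.2 (by exact_mod_cast mul_lt_of_lt_one_left (by exact_mod_cast NeZero.pos m) hx.2)
  have hnonneg : 0 ≤ ⌊x * m⌋ := Int.floor_nonneg.2 (mul_nonneg hx.1 (Nat.cast_nonneg m))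
  lift ⌊x * m⌋ to ℕ using hnonneg with k hk
  simp only [digit, zero_add, pow_one, ← hk, Int.toNat_natCast, Int.cast_natCast]
  rw [Nat.mod_eq_of_lt (by exact_mod_cast hlt)]

end digit

section digitExpansion

variable {m : ℕ}

noncomputable def digitExpansion (m n : ℕ) (d : ℕ → Fin m) (t : ℝ) : ℝ :=
  ∑ i ∈ Finset.range n, ((d i : ℕ) : ℝ) * ((m : ℝ) ^ (i + 1))⁻¹ + t * ((m : ℝ) ^ n)⁻¹

theorem digitExpansion_zero (d : ℕ → Fin m) (t : ℝ) : digitExpansion m 0 d t = t := by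
  simp [digitExpansion]

theorem digitExpansion_succ (n : ℕ) (d : ℕ → Fin m) (t : ℝ) :
    digitExpansion m (n + 1) d t
      = ((d 0 : ℕ) + digitExpansion m n (fun i ↦ d (i + 1)) t) / m := by
  have hsum : ∑ i ∈ Finset.range n, ((d (i + 1) : ℕ) : ℝ) * ((m : ℝ) ^ (i + 1 + 1))⁻¹
      = (∑ i ∈ Finset.range n, ((d (i + 1) : ℕ) : ℝ) * ((m : ℝ) ^ (i + 1))⁻¹) * (m : ℝ)⁻¹ := by
    rw [Finset.sum_mul]
    exact Finset.sum_congr rfl fun i _ ↦ by rw [pow_succ _ (i + 1), mul_inv, mul_assoc]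
  rw [digitExpansion, digitExpansion, Finset.sum_range_succ', hsum, pow_succ, mul_inv]
  ring

variable [NeZero m]

theorem digitExpansion_mem_Ico (n : ℕ) (d : ℕ → Fin m) {t : ℝ} (ht : t ∈ Set.Ico (0 : ℝ) 1) :
    digitExpansion m n d t ∈ Set.Ico (0 : ℝ) 1 := by
  induction n generalizing d with
  | zero => rwa [digitExpansion_zero]
  | succ n ih =>
    obtain ⟨hs₀, hs₁⟩ := ih fun i ↦ d (i + 1)
    have hd : ((d 0 : ℕ) : ℝ) + 1 ≤ m := by exact_mod_cast (d 0).isLt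
    have hm : (0 : ℝ) < m := by exact_mod_cast NeZero.pos m
    rw [digitExpansion_succ]
    exact ⟨by positivity, (div_lt_one hm).2 (by linarith)⟩

theorem digit_digitExpansion {n j : ℕ} (hj : j < n) (d : ℕ → Fin m) {t : ℝ}
    (ht : t ∈ Set.Ico (0 : ℝ) 1) : digit m (digitExpansion m n d t) j = d j := by
  induction n generalizing d j with
  | zero => exact absurd hj (Nat.not_lt_zero j)
  | succ n ih =>
    have hm : (m : ℝ) ≠ 0 := NeZero.ne _
    have hmem := digitExpansion_mem_Ico (n + 1) d ht
    have htail := digitExpansion_mem_Ico n (fun i ↦ d (i + 1)) ht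
    rw [digitExpansion_succ] at hmem ⊢
    cases j with
    | zero =>
      refine Fin.ext (Nat.cast_injective (R := ℝ) ?_)
      rw [digit.natCast_zero_eq_floor hmem, div_mul_cancel₀ _ hm, Int.floor_natCast_add,
        Int.floor_eq_zero_iff.2 htail, add_zero, Int.cast_natCast]
    | succ j =>
      rw [digit.succ, div_mul_cancel₀ _ hm, digit.natCast_add _ htail.1, ih (by omega)]

theorem digitExpansion_digit (n : ℕ) {x : ℝ} (hx : x ∈ Set.Ico (0 : ℝ) 1) :
    digitExpansion m n (digit m x) (Int.fract (x * (m : ℝ) ^ n)) = x := by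
  induction n generalizing x with
  | zero => rw [digitExpansion_zero, pow_zero, mul_one, Int.fract_eq_self.2 hx]
  | succ n ih =>
    set y := Int.fract (x * m)
    have hy : y ∈ Set.Ico (0 : ℝ) 1 := ⟨Int.fract_nonneg _, Int.fract_lt_one _⟩
    have hxm : x * m = (digit m x 0 : ℕ) + y := by
      rw [digit.natCast_zero_eq_floor hx, Int.floor_add_fract]
    have hdigits : (fun i ↦ digit m x (i + 1)) = digit m y := by
      funext i
      rw [digit.succ, hxm, digit.natCast_add _ hy.1]
    have hfract : Int.fract (x * (m : ℝ) ^ (n + 1)) = Int.fract (y * (m : ℝ) ^ n) := by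
      rw [pow_succ', ← mul_assoc, hxm, add_mul]
      exact_mod_cast Int.fract_natCast_add _ _
    rw [digitExpansion_succ, hdigits, hfract, ih hy, ← hxm,
      mul_div_cancel_right₀ _ (NeZero.ne _)]

theorem rho_eq_digitExpansion (l : ℕ) (π : Equiv.Perm (Fin m)) {x : ℝ}
    (hx : x ∈ Set.Ico (0 : ℝ) 1) :
    rho m l π x
      = digitExpansion m l (fun i ↦ π (digit m x i)) (Int.fract (x * (m : ℝ) ^ l)) := by
  rw [rho]
  nth_rw 1 [← digitExpansion_digit (m := m) l hx]
  simp only [digitExpansion, sub_mul, Finset.sum_sub_distrib]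
  ring

end digitExpansion

theorem stmt15_general (m : ℕ) [NeZero m] (l : ℕ) (f : ℝ → ℝ)
    (hf : ∀ x ∈ Set.Ico (0 : ℝ) 1, ∀ y ∈ Set.Ico (0 : ℝ) 1,
      (∀ i < l, ∀ j < l, (digit m x i = digit m x j ↔ digit m y i = digit m y j)) →
      f x = f y) :
    ∀ π : Equiv.Perm (Fin m), ∀ x ∈ Set.Ico (0 : ℝ) 1, f (rho m l π x) = f x := by
  intro π x hx
  have ht : Int.fract (x * (m : ℝ) ^ l) ∈ Set.Ico (0 : ℝ) 1 :=
    ⟨Int.fract_nonneg _, Int.fract_lt_one _⟩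
  rw [rho_eq_digitExpansion l π hx]
  refine hf _ (digitExpansion_mem_Ico l _ ht) x hx fun i hi j hj ↦ ?_
  rw [digit_digitExpansion hi _ ht, digit_digitExpansion hj _ ht]
  exact π.injective.eq_iff

theorem stmt15 (m : ℕ) [NeZero m] (hm : 2 ≤ m) (l : ℕ) (f : ℝ → ℝ)
    (hf : ∀ x ∈ Set.Ico (0 : ℝ) 1, ∀ y ∈ Set.Ico (0 : ℝ) 1,
      (∀ i < l, ∀ j < l, (digit m x i = digit m x j ↔ digit m y i = digit m y j)) →
      f x = f y) :
    ∀ π : Equiv.Perm (Fin m), ∀ x ∈ Set.Ico (0 : ℝ) 1, f (rho m l π x) = f x :=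
  stmt15_general m l f hf
end

section
/- Let m ≥ 2 and let l, r : ℕ be the depths of the stack and input sides of the machine configuration space Y = [0,1)². Let π₁, π₂ be permutations of Fin m each fixing 0 (i.e. π₁(0) = 0 and π₂(0) = 0, so that the pair (π₁,π₂) ranges over the symmetry group S_{m−1} × S_{m−1} of Gödel recodings fixing the blank symbol). Let f : ℝ × ℝ → ℝ be an observable depending only on the patterns of equality of the first l digits of the first coordinate and of the first r digits of the second coordinate, i.e. assume that for all (x₁,x₂), (y₁,y₂) ∈ [0,1)², if (for all i, j < l, c_i(x₁) = c_j(x₁) ↔ c_i(y₁) = c_j(y₁)) and (for all i, j < r, c_i(x₂) = c_j(x₂) ↔ c_i(y₂) = c_j(y₂)), then f(x₁,x₂) = f(y₁,y₂). Then f is invariant under the recoding action: for all (x₁,x₂) ∈ [0,1)², f(ρ_{π₁}(x₁), ρ_{π₂}(x₂)) = f(x₁,x₂), where ρ_{π₁} is the cell-permutation map at depth l and ρ_{π₂} is the cell-permutation map at depth r. -/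
section Digits

variable {m : ℕ} [NeZero m]

lemma digit_val_of_floor_eq {x : ℝ} {i N : ℕ} (h : ⌊x * (m : ℝ) ^ (i + 1)⌋ = N) :
    (digit m x i : ℕ) = N % m := by
  simp [digit, h]

lemma div_mem_Ico (a : Fin m) {s : ℝ} (hs : s ∈ Set.Ico (0 : ℝ) 1) :
    (((a : ℕ) : ℝ) + s) / m ∈ Set.Ico (0 : ℝ) 1 := by
  have hm : (0 : ℝ) < m := by exact_mod_cast Nat.pos_of_neZero m
  have ha : ((a : ℕ) : ℝ) + 1 ≤ m := by exact_mod_cast a.isLt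
  constructor
  · exact div_nonneg (by linarith [hs.1]) hm.le
  · rw [div_lt_one hm]; linarith [hs.2]

lemma exists_eq_div_of_mem_Ico {x : ℝ} (hx : x ∈ Set.Ico (0 : ℝ) 1) :
    ∃ (a : Fin m) (s : ℝ), s ∈ Set.Ico (0 : ℝ) 1 ∧ x = (((a : ℕ) : ℝ) + s) / m := by
  have hm : (0 : ℝ) < m := by exact_mod_cast Nat.pos_of_neZero m
  have hxm : 0 ≤ x * m := mul_nonneg hx.1 hm.le
  have ha : ⌊x * m⌋₊ < m := (Nat.floor_lt hxm).2 (by nlinarith [hx.2])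
  refine ⟨⟨⌊x * m⌋₊, ha⟩, x * m - ⌊x * m⌋₊, ⟨?_, ?_⟩, ?_⟩
  · linarith [Nat.floor_le hxm]
  · linarith [Nat.lt_floor_add_one (x * m)]
  · field_simp; ring

lemma digit_zero_div (a : Fin m) {s : ℝ} (hs : s ∈ Set.Ico (0 : ℝ) 1) :
    digit m ((((a : ℕ) : ℝ) + s) / m) 0 = a := by
  have hm : (m : ℝ) ≠ 0 := Nat.cast_ne_zero.2 (NeZero.ne m)
  refine Fin.ext (digit_val_of_floor_eq ?_ |>.trans (Nat.mod_eq_of_lt a.isLt))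
  rw [zero_add, pow_one, div_mul_cancel₀ _ hm, Int.floor_eq_iff]
  push_cast
  constructor <;> linarith [hs.1, hs.2]

lemma digit_succ_div (a : ℕ) {s : ℝ} (hs : 0 ≤ s) (k : ℕ) :
    digit m (((a : ℝ) + s) / m) (k + 1) = digit m s k := by
  have hm : (m : ℝ) ≠ 0 := Nat.cast_ne_zero.2 (NeZero.ne m)
  obtain ⟨N, hN⟩ := Int.eq_ofNat_of_zero_le
    (Int.floor_nonneg.2 (mul_nonneg hs (pow_nonneg (Nat.cast_nonneg m) (k + 1))))
  have hscale : ((a : ℝ) + s) / m * (m : ℝ) ^ (k + 1 + 1)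
      = ((a * m ^ (k + 1) : ℕ) : ℝ) + s * (m : ℝ) ^ (k + 1) := by
    push_cast; field_simp; ring
  refine Fin.ext ?_
  rw [digit_val_of_floor_eq (N := a * m ^ (k + 1) + N), digit_val_of_floor_eq hN,
    Nat.add_mod, Nat.mul_mod, Nat.mod_eq_zero_of_dvd (dvd_pow_self m k.succ_ne_zero)]
  · simp
  · rw [hscale, Int.floor_natCast_add, hN]; push_cast; rfl

variable (π : Equiv.Perm (Fin m))

lemma rho_succ_div (l : ℕ) (a : Fin m) {s : ℝ} (hs : s ∈ Set.Ico (0 : ℝ) 1) :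
    rho m (l + 1) π ((((a : ℕ) : ℝ) + s) / m) = (((π a : ℕ) : ℝ) + rho m l π s) / m := by
  have hm : (m : ℝ) ≠ 0 := Nat.cast_ne_zero.2 (NeZero.ne m)
  have hshift : ∀ i ∈ Finset.range l,
      (((π (digit m ((((a : ℕ) : ℝ) + s) / m) (i + 1)) : ℕ) : ℝ)
          - ((digit m ((((a : ℕ) : ℝ) + s) / m) (i + 1) : ℕ) : ℝ)) * ((m : ℝ) ^ (i + 1 + 1))⁻¹
        = ((((π (digit m s i) : ℕ) : ℝ) - ((digit m s i : ℕ) : ℝ))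
          * ((m : ℝ) ^ (i + 1))⁻¹) / m := fun i _ => by
    rw [digit_succ_div _ hs.1, pow_succ, mul_inv, mul_div_assoc, div_eq_mul_inv]
  unfold rho
  rw [Finset.sum_range_succ', Finset.sum_congr rfl hshift, ← Finset.sum_div,
    digit_zero_div a hs]
  field_simp
  ring

lemma rho_mem_Ico (l : ℕ) {x : ℝ} (hx : x ∈ Set.Ico (0 : ℝ) 1) :
    rho m l π x ∈ Set.Ico (0 : ℝ) 1 := by
  induction l generalizing x with
  | zero => simpa [rho] using hx
  | succ l ih =>
    obtain ⟨a, s, hs, rfl⟩ := exists_eq_div_of_mem_Ico (m := m) hx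
    rw [rho_succ_div π l a hs]
    exact div_mem_Ico (π a) (ih hs)

lemma digit_rho {l : ℕ} {x : ℝ} (hx : x ∈ Set.Ico (0 : ℝ) 1) {k : ℕ} (hk : k < l) :
    digit m (rho m l π x) k = π (digit m x k) := by
  induction l generalizing x k with
  | zero => exact absurd hk (Nat.not_lt_zero k)
  | succ l ih =>
    obtain ⟨a, s, hs, rfl⟩ := exists_eq_div_of_mem_Ico (m := m) hx
    rw [rho_succ_div π l a hs]
    cases k with
    | zero => rw [digit_zero_div _ (rho_mem_Ico π l hs), digit_zero_div a hs]
    | succ k =>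
      rw [digit_succ_div _ (rho_mem_Ico π l hs).1, digit_succ_div _ hs.1,
        ih hs (Nat.lt_of_succ_lt_succ hk)]

lemma digit_rho_eq_digit_rho_iff {l : ℕ} {x : ℝ} (hx : x ∈ Set.Ico (0 : ℝ) 1)
    {i j : ℕ} (hi : i < l) (hj : j < l) :
    digit m (rho m l π x) i = digit m (rho m l π x) j ↔ digit m x i = digit m x j := by
  rw [digit_rho π hx hi, digit_rho π hx hj, π.apply_eq_iff_eq]

end Digits

theorem stmt16_general (m : ℕ) [NeZero m] (l r : ℕ)
    (π₁ π₂ : Equiv.Perm (Fin m))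
    (f : ℝ × ℝ → ℝ)
    (hf : ∀ x ∈ Set.Ico (0 : ℝ) 1 ×ˢ Set.Ico (0 : ℝ) 1,
          ∀ y ∈ Set.Ico (0 : ℝ) 1 ×ˢ Set.Ico (0 : ℝ) 1,
      (∀ i < l, ∀ j < l,
        (digit m x.1 i = digit m x.1 j ↔ digit m y.1 i = digit m y.1 j)) →
      (∀ i < r, ∀ j < r,
        (digit m x.2 i = digit m x.2 j ↔ digit m y.2 i = digit m y.2 j)) →
      f x = f y) :
    ∀ x ∈ Set.Ico (0 : ℝ) 1 ×ˢ Set.Ico (0 : ℝ) 1,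
      f (rho m l π₁ x.1, rho m r π₂ x.2) = f x := by
  rintro ⟨x₁, x₂⟩ ⟨hx₁, hx₂⟩
  exact hf _ ⟨rho_mem_Ico π₁ l hx₁, rho_mem_Ico π₂ r hx₂⟩ _ ⟨hx₁, hx₂⟩
    (fun i hi j hj => digit_rho_eq_digit_rho_iff π₁ hx₁ hi hj)
    (fun i hi j hj => digit_rho_eq_digit_rho_iff π₂ hx₂ hi hj)

theorem stmt16 (m : ℕ) [NeZero m] (hm : 2 ≤ m) (l r : ℕ)
    (π₁ π₂ : Equiv.Perm (Fin m)) (hπ₁ : π₁ 0 = 0) (hπ₂ : π₂ 0 = 0)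
    (f : ℝ × ℝ → ℝ)
    (hf : ∀ x ∈ Set.Ico (0 : ℝ) 1 ×ˢ Set.Ico (0 : ℝ) 1,
          ∀ y ∈ Set.Ico (0 : ℝ) 1 ×ˢ Set.Ico (0 : ℝ) 1,
      (∀ i < l, ∀ j < l,
        (digit m x.1 i = digit m x.1 j ↔ digit m y.1 i = digit m y.1 j)) →
      (∀ i < r, ∀ j < r,
        (digit m x.2 i = digit m x.2 j ↔ digit m y.2 i = digit m y.2 j)) →
      f x = f y) :
    ∀ x ∈ Set.Ico (0 : ℝ) 1 ×ˢ Set.Ico (0 : ℝ) 1,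
      f (rho m l π₁ x.1, rho m r π₂ x.2) = f x :=
  stmt16_general m l r π₁ π₂ f hf
end
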